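/- arXiv:1412.4259 — 2 statements merged into one kernel-verified Lean document; each statement's English description precedes it below -/
import Mathlib

section
/- There exists a constant c ∈ ℕ such that for every d ≥ 1, every d-VASS V = (Q,T), and all configurations p(u), q(v) with u,v ∈ ℤ^d: if p(u) →*_{ℤ^d} q(v), then there exists a word π ∈ T* with p(u) →^π_{ℤ^d} q(v) and |π| ≤ (|Q| + |T| + ‖T‖ + ‖u‖ + ‖v‖ + 2)^{c·d}. -/
/-!
A path `π` from `p` to `q` through `n` states can be cut, up to reordering its transitions, into a
path `ω` of length `< n²` visiting the same states and a family of cycles of length `≤ n` anchored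
at these states; conversely, any subfamily of the cycles can be spliced back into `ω`. So it
suffices to find a small subfamily with the same total displacement `δ(π) - δ(ω)`, which is
small. The cycle displacements lie in the lattice spanned by the transition vectors, on which
`r ≤ min(d, |T|)` coordinates determine a vector. By the Steinitz lemma the cycles can be ordered
so that these `r` coordinates of all partial sums stay in a box of polynomial size; if there are
more cycles than points in the box, two partial sums agree on it and the block between them has
displacement `0` and can be dropped. So `poly(data)^r` cycles suffice, and `r ≤ d`.
-/

namespace VASS

/-- Integer vectors of dimension `d`. -/
abbrev Vec (d : ℕ) := Fin d → ℤ

/-- A transition of a `d`-VASS: source state, update vector, target state. -/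
abbrev Trans (d : ℕ) := ℕ × Vec d × ℕ

/-- The norm of a vector: maximum of absolute values of its components. -/
def vnorm {d : ℕ} (z : Vec d) : ℕ := Finset.univ.sup fun i => (z i).natAbs

/-- The norm of a transition set. -/
def tnorm {d : ℕ} (T : Finset (Trans d)) : ℕ := T.sup fun t => vnorm t.2.1

/-- The displacement of a word of transitions. -/
def disp {d : ℕ} (π : List (Trans d)) : Vec d := (π.map fun t => t.2.1).sum

/-- `IsPathFrom p q π` : `π` is a path from `p` to `q`. -/
def IsPathFrom {d : ℕ} : ℕ → ℕ → List (Trans d) → Prop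
  | p, q, [] => p = q
  | p, q, t :: rest => t.1 = p ∧ IsPathFrom t.2.2 q rest

/-- ℕ^d as a subset of ℤ^d. -/
def NatSet (d : ℕ) : Set (Vec d) := {v | ∀ i, 0 ≤ v i}

/-- `p(u) →^π_A q(v)`. -/
def Run {d : ℕ} (T : Finset (Trans d)) (A : Set (Vec d)) (p : ℕ) (u : Vec d)
    (q : ℕ) (v : Vec d) (π : List (Trans d)) : Prop :=
  (∀ t ∈ π, t ∈ T) ∧ IsPathFrom p q π ∧ u ∈ A ∧ v = u + disp π ∧
    ∀ i, 1 ≤ i → i ≤ π.length → u + disp (π.take i) ∈ A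

/-- `p(u) →*_A q(v)`. -/
def Reach {d : ℕ} (T : Finset (Trans d)) (A : Set (Vec d)) (p : ℕ) (u : Vec d)
    (q : ℕ) (v : Vec d) : Prop := ∃ π, Run T A p u q v π

/-- A linear path scheme `α₀ β₁* α₁ ⋯ β_k* α_k`, presented as the initial
segment `α₀` together with the list of pairs `(βᵢ, αᵢ)`. -/
abbrev LPS (d : ℕ) := List (Trans d) × List (List (Trans d) × List (Trans d))

/-- The underlying word `α₀ β₁ α₁ ⋯ β_k α_k` of a linear path scheme. -/
def lpsSupport {d : ℕ} (ρ : LPS d) : List (Trans d) :=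
  ρ.1 ++ (ρ.2.map fun s => s.1 ++ s.2).flatten

/-- The length of a linear path scheme. -/
def lpsLen {d : ℕ} (ρ : LPS d) : ℕ := (lpsSupport ρ).length

/-- The number of cycles of a linear path scheme. -/
def numCycles {d : ℕ} (ρ : LPS d) : ℕ := ρ.2.length

/-- `ρ` is a linear path scheme from `p` to `q` over the transition set `T`:
its underlying word uses transitions from `T` and is a path from `p` to `q`,
and each `βᵢ` is a cycle. -/
def IsLPSFrom {d : ℕ} (T : Finset (Trans d)) (p q : ℕ) (ρ : LPS d) : Prop :=
  (∀ t ∈ lpsSupport ρ, t ∈ T) ∧ IsPathFrom p q (lpsSupport ρ) ∧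
    ∀ s ∈ ρ.2, s.1 ≠ [] ∧ ∃ r, IsPathFrom r r s.1

/-- The word `α₀ β₁^{e₁} α₁ ⋯ β_k^{e_k} α_k` of a linear path scheme. -/
def lpsWord {d : ℕ} (ρ : LPS d) (e : List ℕ) : List (Trans d) :=
  ρ.1 ++ (List.zipWith (fun s n => (List.replicate n s.1).flatten ++ s.2) ρ.2 e).flatten

/-- Membership in the language of a linear path scheme. -/
def InLang {d : ℕ} (ρ : LPS d) (π : List (Trans d)) : Prop :=
  ∃ e : List ℕ, e.length = numCycles ρ ∧ π = lpsWord ρ e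

/-- `p(u) →^S_A q(v)` for a finite set `S` of linear path schemes. -/
def SReach {d : ℕ} (T : Finset (Trans d)) (S : Finset (LPS d)) (A : Set (Vec d))
    (p : ℕ) (u : Vec d) (q : ℕ) (v : Vec d) : Prop :=
  ∃ ρ ∈ S, ∃ π, InLang ρ π ∧ Run T A p u q v π

/-- δ(ρ): the set of displacements of words in the language of `ρ`. -/
def DispSet {d : ℕ} (ρ : LPS d) : Set (Vec d) := {z | ∃ π, InLang ρ π ∧ z = disp π}

/-- A quadrant of ℤ². -/
def IsQuadrant (Z : Set (Vec 2)) : Prop :=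
  ∃ ε : Fin 2 → Bool, Z = {v | ∀ i, if ε i then 0 ≤ v i else v i ≤ 0}

/-- A linear path scheme is zigzag-free if the displacements of all its cycles
lie in a single quadrant. -/
def ZigzagFree (ρ : LPS 2) : Prop :=
  ∃ Z, IsQuadrant Z ∧ ∀ s ∈ ρ.2, disp s.1 ∈ Z

end VASS

lemma Submodule.exists_finset_coord_determining {K ι : Type*} [Field K] [Fintype ι]
    (W : Submodule K (ι → K)) :
    ∃ R : Finset ι, R.card ≤ Module.finrank K W ∧ ∀ y ∈ W, (∀ i ∈ R, y i = 0) → y = 0 := by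
  induction hn : Module.finrank K W using Nat.strong_induction_on generalizing W with
  | _ n ih =>
  classical
  by_cases hW : ∀ y ∈ W, y = 0
  · exact ⟨∅, Nat.zero_le _, fun y hy _ => hW y hy⟩
  push Not at hW
  obtain ⟨y₀, hy₀W, hy₀⟩ := hW
  obtain ⟨i₀, hi₀⟩ := Function.ne_iff.1 hy₀
  set W' := W ⊓ LinearMap.ker (LinearMap.proj i₀ : (ι → K) →ₗ[K] K)
  have hlt : W' < W := lt_of_le_of_ne inf_le_left fun h =>
    hi₀ (Submodule.mem_inf.1 (h ▸ hy₀W : y₀ ∈ W')).2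
  have hrank : Module.finrank K W' < n := hn ▸ Submodule.finrank_lt_finrank_of_lt hlt
  obtain ⟨R', hR'card, hR'⟩ := ih _ hrank W' rfl
  refine ⟨insert i₀ R', (Finset.card_insert_le _ _).trans (by omega), fun y hy hzero => ?_⟩
  exact hR' y (Submodule.mem_inf.2 ⟨hy, hzero i₀ (Finset.mem_insert_self _ _)⟩)
    fun i hi => hzero i (Finset.mem_insert_of_mem hi)

lemma exists_finset_coord_determining_closure {ι : Type*} [Fintype ι] (S : Finset (ι → ℤ)) :
    ∃ R : Finset ι, R.card ≤ S.card ∧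
      ∀ x ∈ AddSubgroup.closure (S : Set (ι → ℤ)), (∀ i ∈ R, x i = 0) → x = 0 := by
  classical
  let cast : (ι → ℤ) →+ (ι → ℚ) := (Int.castAddHom ℚ).compLeft ι
  let W := Submodule.span ℚ (cast '' S)
  obtain ⟨R, hRcard, hR⟩ := W.exists_finset_coord_determining
  have hcast : AddSubgroup.closure (S : Set (ι → ℤ)) ≤ W.toAddSubgroup.comap cast :=
    (AddSubgroup.closure_le _).2 fun x hx => Submodule.subset_span ⟨x, hx, rfl⟩
  refine ⟨R, hRcard.trans ?_, fun x hx hzero => ?_⟩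
  · calc Module.finrank ℚ W ≤ (S.image cast).card := by
          have := finrank_span_finset_le_card (R := ℚ) (S.image cast)
          rwa [Finset.coe_image] at this
      _ ≤ S.card := Finset.card_image_le
  · have := hR (cast x) (hcast hx) fun i hi => by simp [cast, hzero i hi]
    funext i
    simpa [cast] using congrFun this i

lemma exists_null_combination {K κ ι : Type*} [Field K] [Fintype κ] (F : Finset ι) (w : ι → κ → K)
    (hF : Fintype.card κ + 1 < F.card) :
    ∃ μ : ι → K, (∀ i ∉ F, μ i = 0) ∧ (∃ i ∈ F, μ i ≠ 0) ∧
      ∑ i ∈ F, μ i = 0 ∧ ∑ i ∈ F, μ i • w i = 0 := by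
  classical
  have hdep : ¬ LinearIndependent K (fun i : F => ((w i, 1) : (κ → K) × K)) := fun hli => by
    have := hli.fintype_card_le_finrank
    simp only [Module.finrank_prod, Module.finrank_fintype_fun_eq_card, Module.finrank_self,
      Fintype.card_coe] at this
    omega
  obtain ⟨g, hg, i₁, hi₁⟩ := Fintype.not_linearIndependent_iff.1 hdep
  refine ⟨fun i => if h : i ∈ F then g ⟨i, h⟩ else 0, fun i hi => dif_neg hi,
    ⟨i₁, i₁.2, by simpa using hi₁⟩, ?_, ?_⟩
  · rw [← Finset.sum_coe_sort F]
    simpa [Prod.snd_sum] using congrArg Prod.snd hg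
  · rw [← Finset.sum_coe_sort F]
    simpa [Prod.fst_sum] using congrArg Prod.fst hg

section Steinitz
variable {K : Type*} [Field K] [LinearOrder K] [IsStrictOrderedRing K] {κ ι : Type*}

def fracIndices (s : Finset ι) (c : ι → K) : Finset ι := s.filter fun i => 0 < c i ∧ c i < 1

/-- The time `t ≥ 0` at which `a + t * m` leaves the open interval `(0, 1)`. -/
def exitTime (a m : K) : K := if 0 < m then (1 - a) / m else a / -m

lemma exitTime_pos {a m : K} (h0 : 0 < a) (h1 : a < 1) (hm : m ≠ 0) : 0 < exitTime a m := by
  unfold exitTime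
  split_ifs with hpos
  · exact div_pos (by linarith) hpos
  · exact div_pos h0 (by linarith [lt_of_le_of_ne (not_lt.1 hpos) hm])

lemma add_mul_mem_Icc_of_le_exitTime {a m t : K} (h0 : 0 ≤ a) (h1 : a ≤ 1) (ht : 0 ≤ t)
    (hle : t ≤ exitTime a m) : 0 ≤ a + t * m ∧ a + t * m ≤ 1 := by
  unfold exitTime at hle
  rcases lt_trichotomy m 0 with hneg | rfl | hpos
  · rw [if_neg hneg.not_gt, le_div_iff₀ (by linarith)] at hle
    constructor <;> nlinarith
  · simp [h0, h1]
  · rw [if_pos hpos, le_div_iff₀ hpos] at hle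
    constructor <;> nlinarith

lemma add_exitTime_mul_notMem_Ioo {a m : K} (hm : m ≠ 0) :
    ¬ (0 < a + exitTime a m * m ∧ a + exitTime a m * m < 1) := by
  unfold exitTime
  split_ifs with hpos
  · rw [div_mul_cancel₀ _ hm]; simp
  · rw [div_neg, neg_mul, div_mul_cancel₀ _ hm]; simp

lemma exists_shift_fracIndices_ssubset (s : Finset ι) (c μ : ι → K)
    (hc : ∀ i ∈ s, 0 ≤ c i ∧ c i ≤ 1) (hμ : ∀ i ∉ fracIndices s c, μ i = 0)
    (hμ' : ∃ i ∈ fracIndices s c, μ i ≠ 0) :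
    ∃ t : K, (∀ i ∈ s, 0 ≤ c i + t * μ i ∧ c i + t * μ i ≤ 1) ∧
      fracIndices s (fun i => c i + t * μ i) ⊂ fracIndices s c := by
  set G := (fracIndices s c).filter fun i => μ i ≠ 0
  have hG : ∀ i ∈ G, 0 < c i ∧ c i < 1 ∧ μ i ≠ 0 := by
    simp only [G, fracIndices, Finset.mem_filter]
    tauto
  obtain ⟨i₁, hi₁F, hi₁⟩ := hμ'
  obtain ⟨i', hi'G, hmin⟩ := G.exists_min_image (fun i => exitTime (c i) (μ i))
    ⟨i₁, Finset.mem_filter.2 ⟨hi₁F, hi₁⟩⟩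
  obtain ⟨hi'0, hi'1, hi'μ⟩ := hG i' hi'G
  have ht : 0 < exitTime (c i') (μ i') := exitTime_pos hi'0 hi'1 hi'μ
  have hfrac : ∀ i, μ i ≠ 0 → i ∈ fracIndices s c := fun i hi => by_contra fun h => hi (hμ i h)
  refine ⟨exitTime (c i') (μ i'), fun i hi => ?_, ?_⟩
  · by_cases hμi : μ i = 0
    · simpa [hμi] using hc i hi
    · exact add_mul_mem_Icc_of_le_exitTime (hc i hi).1 (hc i hi).2 ht.le
        (hmin i (Finset.mem_filter.2 ⟨hfrac i hμi, hμi⟩))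
  · refine (Finset.ssubset_iff_of_subset fun i hi => ?_).2
      ⟨i', hfrac i' hi'μ, fun h => add_exitTime_mul_notMem_Ioo hi'μ (Finset.mem_filter.1 h).2⟩
    by_cases hμi : μ i = 0
    · simpa [fracIndices, hμi] using hi
    · exact hfrac i hμi

/-- Carathéodory-type reduction: shift along a null combination of the `(w i, 1)` supported on
the fractional indices until one of them reaches `0` or `1`. -/
lemma exists_coeffs_card_fracIndices_le [Fintype κ] (s : Finset ι) (w : ι → κ → K) (c : ι → K)
    (hc : ∀ i ∈ s, 0 ≤ c i ∧ c i ≤ 1) :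
    ∃ c' : ι → K, (∀ i ∈ s, 0 ≤ c' i ∧ c' i ≤ 1) ∧ ∑ i ∈ s, c' i = ∑ i ∈ s, c i ∧
      ∑ i ∈ s, c' i • w i = ∑ i ∈ s, c i • w i ∧
      (fracIndices s c').card ≤ Fintype.card κ + 1 := by
  induction hF : (fracIndices s c).card using Nat.strong_induction_on generalizing c with
  | _ F ih =>
  by_cases hsmall : F ≤ Fintype.card κ + 1
  · exact ⟨c, hc, rfl, rfl, hF ▸ hsmall⟩
  obtain ⟨μ, hμ, hμ', hμsum, hμw⟩ := exists_null_combination (fracIndices s c) w (by omega)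
  have hsupp : fracIndices s c ⊆ s := Finset.filter_subset _ _
  rw [Finset.sum_subset hsupp fun i _ hi => hμ i hi] at hμsum
  rw [Finset.sum_subset hsupp fun i _ hi => by rw [hμ i hi, zero_smul]] at hμw
  obtain ⟨t, ht, hssub⟩ := exists_shift_fracIndices_ssubset s c μ hc hμ hμ'
  obtain ⟨c', hc', hsum', hlin', hcard'⟩ := ih _ (hF ▸ Finset.card_lt_card hssub) _ ht rfl
  refine ⟨c', hc', hsum'.trans ?_, hlin'.trans ?_, hcard'⟩
  · rw [Finset.sum_add_distrib, ← Finset.mul_sum, hμsum, mul_zero, add_zero]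
  · simp_rw [add_smul, mul_smul]
    rw [Finset.sum_add_distrib, ← Finset.smul_sum, hμw, smul_zero, add_zero]

lemma abs_sum_map_le {α : Type*} (l : List α) (w : α → κ → K) {δ : K}
    (hw : ∀ x ∈ l, ∀ j, |w x j| ≤ δ) (j : κ) : |(l.map w).sum j| ≤ l.length * δ := by
  induction l with
  | nil => simp
  | cons x l ih =>
    simp only [List.map_cons, List.sum_cons, Pi.add_apply, List.length_cons]
    have := ih fun y hy => hw y (List.mem_cons_of_mem x hy)
    have := hw x List.mem_cons_self j
    push_cast
    linarith [abs_add_le (w x j) ((l.map w).sum j)]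

lemma abs_sum_le_of_sum_smul_eq_zero (s : Finset ι) (w : ι → κ → K) {δ : K}
    (hw : ∀ i ∈ s, ∀ j, |w i j| ≤ δ) (c : ι → K) (hc : ∀ i ∈ s, 0 ≤ c i ∧ c i ≤ 1)
    (hlin : ∑ i ∈ s, c i • w i = 0) (j : κ) :
    |∑ i ∈ s, w i j| ≤ (∑ i ∈ s, (1 - c i)) * δ := by
  have hlin_j : ∑ i ∈ s, c i * w i j = 0 := by simpa using congrFun hlin j
  have hsplit : ∑ i ∈ s, w i j = ∑ i ∈ s, (1 - c i) * w i j := by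
    simp only [sub_mul, one_mul, Finset.sum_sub_distrib, hlin_j, sub_zero]
  rw [hsplit, Finset.sum_mul]
  refine (Finset.abs_sum_le_sum_abs _ _).trans (Finset.sum_le_sum fun i hi => ?_)
  rw [abs_mul, abs_of_nonneg (by linarith [(hc i hi).2])]
  exact mul_le_mul_of_nonneg_left (hw i hi j) (by linarith [(hc i hi).2])

/-- Otherwise every coefficient is `1` except at most `dim + 1` fractional ones, and the sum
would exceed `|s| - (dim + 2)`. -/
lemma exists_coeff_eq_zero [Fintype κ] (s : Finset ι) (c : ι → K) (hc : ∀ i ∈ s, 0 ≤ c i ∧ c i ≤ 1)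
    (hsum : ∑ i ∈ s, c i = s.card - (Fintype.card κ + 2))
    (hfrac : (fracIndices s c).card ≤ Fintype.card κ + 1) : ∃ i ∈ s, c i = 0 := by
  by_contra! hpos
  have hrest : s.filter (fun i => ¬ c i = 1) ⊆ fracIndices s c := fun i hi => by
    simp only [Finset.mem_filter, fracIndices] at hi ⊢
    exact ⟨hi.1, lt_of_le_of_ne (hc i hi.1).1 (hpos i hi.1).symm,
      lt_of_le_of_ne (hc i hi.1).2 hi.2⟩
  have hcard : s.card ≤ (s.filter fun i => c i = 1).card + (Fintype.card κ + 1) := by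
    have := Finset.card_filter_add_card_filter_not (s := s) (fun i => c i = 1)
    have := Finset.card_le_card hrest
    omega
  have hones : ((s.filter fun i => c i = 1).card : K) ≤ ∑ i ∈ s, c i := by
    calc ((s.filter fun i => c i = 1).card : K) = ∑ i ∈ s.filter fun i => c i = 1, c i := by
          rw [Finset.sum_congr rfl fun i hi => (Finset.mem_filter.1 hi).2]; simp
      _ ≤ ∑ i ∈ s, c i := Finset.sum_le_sum_of_subset_of_nonneg (Finset.filter_subset _ _)
          fun i hi _ => (hc i hi).1
  have : (s.card : K) ≤ (s.filter fun i => c i = 1).card + (Fintype.card κ + 1) := by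
    exact_mod_cast hcard
  linarith

lemma exists_coeffs_erase [Fintype κ] (s : Finset ι) [DecidableEq ι] (w : ι → κ → K) (c : ι → K)
    (hc : ∀ i ∈ s, 0 ≤ c i ∧ c i ≤ 1) (hm : Fintype.card κ + 2 < s.card)
    (hsum : ∑ i ∈ s, c i = s.card - (Fintype.card κ + 2)) (hlin : ∑ i ∈ s, c i • w i = 0)
    {i₀ : ι} (hi₀ : i₀ ∈ s) (hc₀ : c i₀ = 0) :
    ∃ c' : ι → K, (∀ i ∈ s.erase i₀, 0 ≤ c' i ∧ c' i ≤ 1) ∧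
      ∑ i ∈ s.erase i₀, c' i = (s.erase i₀).card - (Fintype.card κ + 2) ∧
      ∑ i ∈ s.erase i₀, c' i • w i = 0 := by
  set D : K := s.card - (Fintype.card κ + 2)
  have hD : 1 ≤ D := by
    have : ((Fintype.card κ + 2 + 1 : ℕ) : K) ≤ s.card := by exact_mod_cast hm
    push_cast at this
    linarith
  have hγ0 : 0 ≤ (D - 1) / D := div_nonneg (by linarith) (by linarith)
  have hγ1 : (D - 1) / D ≤ 1 := (div_le_one (by linarith)).2 (by linarith)
  refine ⟨fun i => (D - 1) / D * c i, fun i hi => ?_, ?_, ?_⟩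
  · obtain ⟨h0, h1⟩ := hc i (Finset.mem_of_mem_erase hi)
    exact ⟨mul_nonneg hγ0 h0, by nlinarith⟩
  · rw [← Finset.mul_sum, Finset.sum_erase _ hc₀, hsum, Finset.card_erase_of_mem hi₀,
      Nat.cast_pred (Finset.card_pos.2 ⟨i₀, hi₀⟩), div_mul_cancel₀ _ (by linarith)]
    ring
  · simp_rw [mul_smul]
    rw [← Finset.smul_sum, Finset.sum_erase _ (by simp [hc₀]), hlin, smul_zero]

/-- Steinitz lemma, by the Grinberg–Sevastyanov induction: once at most `dim + 1` coefficients
are fractional, one of them vanishes; that index goes last, as the full sum equals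
`∑ (1 - c i) • w i`, whose coordinates are bounded by `(dim + 2) δ`. -/
theorem exists_order_abs_sum_take_le_of_coeffs [Fintype κ] [DecidableEq ι] {δ : K} (hδ : 0 ≤ δ)
    (w : ι → κ → K) (s : Finset ι) (hw : ∀ i ∈ s, ∀ j, |w i j| ≤ δ) (c : ι → K)
    (hc : ∀ i ∈ s, 0 ≤ c i ∧ c i ≤ 1)
    (hsum : ∑ i ∈ s, c i = s.card - (Fintype.card κ + 2)) (hlin : ∑ i ∈ s, c i • w i = 0) :
    ∃ ord : List ι, ord.Nodup ∧ ord.toFinset = s ∧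
      ∀ k j, |((ord.take k).map w).sum j| ≤ (Fintype.card κ + 2) * δ := by
  induction hm : s.card using Nat.strong_induction_on generalizing s c with
  | _ m ih =>
  by_cases hsmall : m ≤ Fintype.card κ + 2
  · refine ⟨s.toList, s.nodup_toList, s.toList_toFinset, fun k j => ?_⟩
    refine (abs_sum_map_le _ w (fun i hi => hw i ?_) j).trans ?_
    · exact Finset.mem_toList.1 (List.take_subset _ _ hi)
    · have : (s.toList.take k).length ≤ Fintype.card κ + 2 := by
        simp only [List.length_take, Finset.length_toList]; omega
      exact mul_le_mul_of_nonneg_right (by exact_mod_cast this) hδ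
  obtain ⟨c', hc', hsum', hlin', hfrac⟩ := exists_coeffs_card_fracIndices_le s w c hc
  rw [hsum] at hsum'
  rw [hlin] at hlin'
  obtain ⟨i₀, hi₀, hc₀⟩ := exists_coeff_eq_zero s c' hc' hsum' hfrac
  obtain ⟨c'', hc'', hsum'', hlin''⟩ :=
    exists_coeffs_erase s w c' hc' (by omega) hsum' hlin' hi₀ hc₀
  obtain ⟨ord, hnodup, hord, hbound⟩ := ih _ (by rw [Finset.card_erase_of_mem hi₀]; omega)
    (s.erase i₀) (fun i hi => hw i (Finset.mem_of_mem_erase hi)) c'' hc'' hsum'' hlin'' rfl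
  have hi₀ord : i₀ ∉ ord := by simp [← List.mem_toFinset, hord]
  have hnodup' : (ord ++ [i₀]).Nodup := by
    simpa [List.nodup_append, hnodup] using fun a ha (h : a = i₀) => hi₀ord (h ▸ ha)
  have hord' : (ord ++ [i₀]).toFinset = s := by
    simp [hord, Finset.insert_erase hi₀]
  refine ⟨ord ++ [i₀], hnodup', hord', fun k j => ?_⟩
  rcases le_or_gt k ord.length with hk | hk
  · rw [List.take_append_of_le_length hk]
    exact hbound k j
  · have hfull : (ord ++ [i₀]).length ≤ k := by
      simp only [List.length_append, List.length_cons, List.length_nil]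
      omega
    rw [List.take_of_length_le hfull, ← List.sum_toFinset w hnodup', hord', Finset.sum_apply]
    refine (abs_sum_le_of_sum_smul_eq_zero s w hw c' hc' hlin' j).trans (le_of_eq ?_)
    rw [Finset.sum_sub_distrib, hsum', Finset.sum_const, nsmul_one, hm]
    ring

theorem List.exists_perm_abs_sum_take_le [Fintype κ] {α : Type*} (l : List α) (f : α → κ → K)
    {δ : K} (hδ : 0 ≤ δ) (hf : ∀ x ∈ l, ∀ j, |f x j| ≤ δ) (h0 : (l.map f).sum = 0) :
    ∃ l' : List α, l'.Perm l ∧ ∀ k j, |((l'.take k).map f).sum j| ≤ (Fintype.card κ + 2) * δ := by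
  by_cases hsmall : l.length ≤ Fintype.card κ + 2
  · refine ⟨l, List.Perm.refl l, fun k j => (abs_sum_map_le _ f
      (fun x hx => hf x (List.take_subset _ _ hx)) j).trans ?_⟩
    have : (l.take k).length ≤ Fintype.card κ + 2 := by simp only [List.length_take]; omega
    exact mul_le_mul_of_nonneg_right (by exact_mod_cast this) hδ
  have hn : (Fintype.card κ + 2 : K) < l.length := by exact_mod_cast not_le.1 hsmall
  have hn0 : (0 : K) < l.length := by linarith
  set c : K := (l.length - (Fintype.card κ + 2)) / l.length
  have hsumw : ∑ i : Fin l.length, f (l.get i) = 0 := by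
    rw [Fin.sum_univ_def, show (fun i => f (l.get i)) = f ∘ l.get from rfl, ← List.map_map,
      List.map_get_finRange, h0]
  obtain ⟨ord, hnodup, hord, hbound⟩ := exists_order_abs_sum_take_le_of_coeffs hδ
    (fun i => f (l.get i)) Finset.univ (fun i _ => hf _ (List.get_mem l i)) (fun _ => c)
    (fun _ _ => ⟨div_nonneg (by linarith) hn0.le, (div_le_one hn0).2 (by linarith)⟩)
    (by simp only [Finset.sum_const, Finset.card_univ, Fintype.card_fin, nsmul_eq_mul, c]
        field_simp)
    (by rw [← Finset.smul_sum, hsumw, smul_zero])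
  refine ⟨ord.map l.get, ?_, fun k j => by
    simpa [← List.map_take, Function.comp_def] using hbound k j⟩
  have hperm : ord.Perm (List.finRange l.length) :=
    List.perm_of_nodup_nodup_toFinset_eq hnodup (List.nodup_finRange l.length) (by simp [hord])
  simpa [List.map_get_finRange] using hperm.map l.get

end Steinitz

namespace VASS

section Paths
variable {d : ℕ}

def endState : ℕ → List (Trans d) → ℕ
  | p, [] => p
  | _, t :: π => endState t.2.2 π

def visited (p : ℕ) (π : List (Trans d)) : Finset ℕ :=
  insert p (π.map fun t => t.2.2).toFinset

@[simp] lemma endState_nil (p : ℕ) : endState p ([] : List (Trans d)) = p := rfl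

@[simp] lemma endState_cons (p : ℕ) (t : Trans d) (π : List (Trans d)) :
    endState p (t :: π) = endState t.2.2 π := rfl

lemma endState_append (p : ℕ) (xs ys : List (Trans d)) :
    endState p (xs ++ ys) = endState (endState p xs) ys := by
  induction xs generalizing p with
  | nil => rfl
  | cons t xs ih => exact ih _

lemma IsPathFrom.endState_eq {p q : ℕ} {π : List (Trans d)} (h : IsPathFrom p q π) :
    endState p π = q := by
  induction π generalizing p with
  | nil => exact h
  | cons t π ih => exact ih h.2

lemma isPathFrom_append {p r : ℕ} {xs ys : List (Trans d)} :
    IsPathFrom p r (xs ++ ys) ↔ ∃ q, IsPathFrom p q xs ∧ IsPathFrom q r ys := by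
  induction xs generalizing p with
  | nil => simp [IsPathFrom]
  | cons t xs ih => simp [IsPathFrom, ih, and_assoc]

lemma visited_cons (p : ℕ) (t : Trans d) (π : List (Trans d)) :
    visited p (t :: π) = insert p (visited t.2.2 π) := by
  simp [visited]

lemma visited_append (p : ℕ) (xs ys : List (Trans d)) :
    visited p (xs ++ ys) = visited p xs ∪ (ys.map fun t => t.2.2).toFinset := by
  simp [visited, Finset.insert_union]

lemma visited_mono {p : ℕ} {π π' : List (Trans d)} (h : π' ⊆ π) :
    visited p π' ⊆ visited p π :=
  Finset.insert_subset_insert _ fun _ ha => by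
    simp only [List.mem_toFinset, List.mem_map] at ha ⊢
    obtain ⟨t, ht, rfl⟩ := ha
    exact ⟨t, h ht, rfl⟩

lemma endState_mem_visited (p : ℕ) (π : List (Trans d)) : endState p π ∈ visited p π := by
  induction π generalizing p with
  | nil => simp [visited]
  | cons t π ih => rw [visited_cons]; exact Finset.mem_insert_of_mem (ih _)

lemma visited_take_mono (p : ℕ) (π : List (Trans d)) {i j : ℕ} (hij : i ≤ j) :
    visited p (π.take i) ⊆ visited p (π.take j) :=
  visited_mono (List.take_subset_take_left π hij)

/-- Cycles are only cut out when this keeps the set of visited states, so that they can later be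
spliced back in at their anchor. -/
def HasRemovableCycle (p : ℕ) (π : List (Trans d)) : Prop :=
  ∃ xs c ys, π = xs ++ c ++ ys ∧ c ≠ [] ∧ c.length ≤ (visited p π).card ∧
    endState p (xs ++ c) = endState p xs ∧ visited p (xs ++ ys) = visited p π

lemma hasRemovableCycle_of_visited_take_eq {p : ℕ} {π : List (Trans d)} {i j : ℕ}
    (hij : i < j) (hj : j ≤ π.length) (hlen : j - i ≤ (visited p π).card)
    (hend : endState p (π.take i) = endState p (π.take j))
    (hvis : visited p (π.take i) = visited p (π.take j)) : HasRemovableCycle p π := by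
  have hsplit : π.take j = π.take i ++ (π.drop i).take (j - i) := by
    rw [← List.take_add, Nat.add_sub_cancel' hij.le]
  refine ⟨π.take i, (π.drop i).take (j - i), π.drop j, ?_, ?_, ?_, ?_, ?_⟩
  · rw [← hsplit, List.take_append_drop]
  · rw [← List.length_pos_iff]
    simp only [List.length_take, List.length_drop]
    omega
  · simp only [List.length_take, List.length_drop]
    omega
  · rw [← hsplit, hend]
  · conv_rhs => rw [← List.take_append_drop j π]
    rw [visited_append, visited_append, hvis]

lemma hasRemovableCycle_or_card_visited_take_lt {p : ℕ} {π : List (Trans d)} {a : ℕ}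
    (ha : a + (visited p π).card ≤ π.length) :
    HasRemovableCycle p π ∨
      (visited p (π.take a)).card < (visited p (π.take (a + (visited p π).card))).card := by
  set n := (visited p π).card
  obtain ⟨x, hx, y, hy, hxy, hxy_end⟩ :=
    Finset.exists_ne_map_eq_of_card_lt_of_maps_to (s := Finset.Icc a (a + n))
      (t := visited p π) (f := fun k => endState p (π.take k))
      (by simp only [Nat.card_Icc]; omega)
      (fun k _ => visited_mono (List.take_subset k π) (endState_mem_visited p _))
  rw [Finset.mem_Icc] at hx hy
  wlog hlt : x < y generalizing x y
  · exact this y hy x hx hxy.symm hxy_end.symm (by omega)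
  by_cases hvis : visited p (π.take x) = visited p (π.take y)
  · exact .inl (hasRemovableCycle_of_visited_take_eq hlt (by omega) (by omega) hxy_end hvis)
  · refine .inr ?_
    calc (visited p (π.take a)).card ≤ (visited p (π.take x)).card :=
          Finset.card_le_card (visited_take_mono p π hx.1)
      _ < (visited p (π.take y)).card := Finset.card_lt_card
          (Finset.ssubset_iff_subset_ne.2 ⟨visited_take_mono p π hlt.le, hvis⟩)
      _ ≤ _ := Finset.card_le_card (visited_take_mono p π hy.2)

/-- Pigeonhole over `n` windows of `n + 1` consecutive positions: if none of them contains a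
removable cycle, each one adds a new visited state. -/
lemma hasRemovableCycle_of_sq_le {p : ℕ} {π : List (Trans d)}
    (h : (visited p π).card ^ 2 ≤ π.length) : HasRemovableCycle p π := by
  set n := (visited p π).card
  by_contra hno
  have hgrow : ∀ w ≤ n, w + 1 ≤ (visited p (π.take (w * n))).card := by
    intro w hw
    induction w with
    | zero => simp [visited]
    | succ w ih =>
      have hwin : w * n + n ≤ π.length := by nlinarith
      have hstep : (visited p (π.take (w * n))).card < (visited p (π.take (w * n + n))).card :=
        (hasRemovableCycle_or_card_visited_take_lt hwin).resolve_left hno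
      rw [Nat.succ_mul]
      have := ih (by omega)
      omega
  have hle := Finset.card_le_card (visited_mono (p := p) (List.take_subset (n * n) π))
  have := hgrow n le_rfl
  omega

lemma disp_append (xs ys : List (Trans d)) : disp (xs ++ ys) = disp xs + disp ys := by
  simp [disp]

lemma disp_flatten (L : List (List (Trans d))) : disp L.flatten = (L.map disp).sum := by
  induction L with
  | nil => rfl
  | cons π L ih => simp [disp_append, ih]

lemma disp_eq_of_perm {π π' : List (Trans d)} (h : π.Perm π') : disp π = disp π' :=
  (h.map _).sum_eq

lemma exists_short_path_and_cycles {p q : ℕ} (π : List (Trans d)) (hπ : IsPathFrom p q π) :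
    ∃ (ω : List (Trans d)) (cs : List (ℕ × List (Trans d))),
      IsPathFrom p q ω ∧ visited p ω = visited p π ∧ ω.length < (visited p π).card ^ 2 ∧
      (∀ c ∈ cs, c.1 ∈ visited p π ∧ IsPathFrom c.1 c.1 c.2 ∧
        c.2.length ≤ (visited p π).card) ∧
      π.Perm (ω ++ (cs.map Prod.snd).flatten) := by
  induction hL : π.length using Nat.strong_induction_on generalizing π with
  | _ L ih =>
  by_cases hshort : π.length < (visited p π).card ^ 2
  · exact ⟨π, [], hπ, rfl, hshort, by simp, by simp⟩
  obtain ⟨xs, c, ys, rfl, hc, hclen, hcyc, hvis⟩ := hasRemovableCycle_of_sq_le (not_lt.1 hshort)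
  obtain ⟨a, hxs, hrest⟩ := isPathFrom_append.1 (List.append_assoc xs c ys ▸ hπ)
  obtain ⟨b, hc', hys⟩ := isPathFrom_append.1 hrest
  have hba : b = a := by
    rw [← hc'.endState_eq, ← hxs.endState_eq, ← endState_append, hcyc]
  subst hba
  have hshorter : (xs ++ ys).length < L := by
    have := List.length_pos_iff.2 hc
    simp only [← hL, List.length_append]
    omega
  obtain ⟨ω, cs, hω, hωvis, hωlen, hcs, hperm⟩ :=
    ih _ hshorter (xs ++ ys) (isPathFrom_append.2 ⟨b, hxs, hys⟩) rfl
  rw [hvis] at hωvis hωlen hcs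
  refine ⟨ω, (b, c) :: cs, hω, hωvis, hωlen, ?_, ?_⟩
  · intro c' hc'mem
    rcases List.mem_cons.1 hc'mem with rfl | hc'cs
    · refine ⟨?_, hc', hclen⟩
      rw [← hxs.endState_eq]
      exact visited_mono (fun t ht => List.mem_append_left _ (List.mem_append_left _ ht))
        (endState_mem_visited p xs)
    · exact hcs c' hc'cs
  · have hmove : (xs ++ c ++ ys).Perm (xs ++ ys ++ c) := by
      rw [List.append_assoc, List.append_assoc]
      exact List.perm_append_comm.append_left xs
    refine hmove.trans ((hperm.append_right c).trans ?_)
    simpa using List.perm_append_comm.append_left ω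

lemma exists_perm_append_of_cycle {p q a : ℕ} {ω c : List (Trans d)}
    (hω : IsPathFrom p q ω) (ha : a ∈ visited p ω) (hc : IsPathFrom a a c) :
    ∃ ω', IsPathFrom p q ω' ∧ ω'.Perm (ω ++ c) := by
  induction ω generalizing p with
  | nil =>
    obtain rfl : a = p := by simpa [visited] using ha
    exact ⟨c, hω ▸ hc, by simp⟩
  | cons t ω ih =>
    obtain ⟨ht, hω⟩ := hω
    rw [visited_cons, Finset.mem_insert] at ha
    rcases ha with rfl | ha
    · exact ⟨c ++ t :: ω, isPathFrom_append.2 ⟨a, hc, ht, hω⟩, List.perm_append_comm⟩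
    · obtain ⟨ω', hω', hperm⟩ := ih hω ha
      exact ⟨t :: ω', ⟨ht, hω'⟩, hperm.cons t⟩

lemma exists_perm_append_of_cycles {p q : ℕ} (cs : List (ℕ × List (Trans d)))
    {ω : List (Trans d)} (hω : IsPathFrom p q ω)
    (hcs : ∀ c ∈ cs, c.1 ∈ visited p ω ∧ IsPathFrom c.1 c.1 c.2) :
    ∃ ω', IsPathFrom p q ω' ∧ ω'.Perm (ω ++ (cs.map Prod.snd).flatten) := by
  induction cs generalizing ω with
  | nil => exact ⟨ω, hω, by simp⟩
  | cons c cs ih =>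
    obtain ⟨hc₁, hc₂⟩ := hcs c List.mem_cons_self
    obtain ⟨ω₁, hω₁, hperm₁⟩ := exists_perm_append_of_cycle hω hc₁ hc₂
    have hsub : visited p ω ⊆ visited p ω₁ :=
      visited_mono fun t ht => hperm₁.symm.subset (List.mem_append_left _ ht)
    obtain ⟨ω', hω', hperm⟩ :=
      ih hω₁ fun c' hc' => (hcs c' (List.mem_cons_of_mem _ hc')).imp_left (@hsub _)
    exact ⟨ω', hω', hperm.trans (by simpa using hperm₁.append_right _)⟩

end Paths

section Norms
variable {d : ℕ}

lemma natAbs_le_vnorm (x : Vec d) (i : Fin d) : (x i).natAbs ≤ vnorm x :=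
  Finset.le_sup (f := fun i => (x i).natAbs) (Finset.mem_univ i)

lemma vnorm_le_iff {x : Vec d} {B : ℕ} : vnorm x ≤ B ↔ ∀ i, (x i).natAbs ≤ B := by
  simp [vnorm]

lemma vnorm_add_le (x y : Vec d) : vnorm (x + y) ≤ vnorm x + vnorm y :=
  vnorm_le_iff.2 fun i => (Int.natAbs_add_le _ _).trans
    (add_le_add (natAbs_le_vnorm x i) (natAbs_le_vnorm y i))

lemma vnorm_sub_le (x y : Vec d) : vnorm (x - y) ≤ vnorm x + vnorm y :=
  vnorm_le_iff.2 fun i => (Int.natAbs_sub_le _ _).trans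
    (add_le_add (natAbs_le_vnorm x i) (natAbs_le_vnorm y i))

lemma vnorm_sum_le (l : List (Vec d)) {B : ℕ} (h : ∀ x ∈ l, vnorm x ≤ B) :
    vnorm l.sum ≤ l.length * B := by
  induction l with
  | nil => simp [vnorm]
  | cons x l ih =>
    simp only [List.sum_cons, List.length_cons, add_mul, one_mul, add_comm _ B]
    exact (vnorm_add_le _ _).trans (add_le_add (h x List.mem_cons_self)
      (ih fun y hy => h y (List.mem_cons_of_mem x hy)))

lemma vnorm_le_tnorm {T : Finset (Trans d)} {t : Trans d} (ht : t ∈ T) : vnorm t.2.1 ≤ tnorm T :=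
  Finset.le_sup (f := fun t => vnorm t.2.1) ht

lemma vnorm_disp_le {T : Finset (Trans d)} {π : List (Trans d)} (h : ∀ t ∈ π, t ∈ T) :
    vnorm (disp π) ≤ π.length * tnorm T := by
  simpa [disp] using vnorm_sum_le (π.map fun t => t.2.1) fun x hx => by
    obtain ⟨t, ht, rfl⟩ := List.mem_map.1 hx
    exact vnorm_le_tnorm (h t ht)

lemma abs_intCast_le_of_vnorm_le {x : Vec d} {B : ℕ} (h : vnorm x ≤ B) (i : Fin d) :
    |(x i : ℚ)| ≤ B := by
  rw [← Int.cast_abs, Int.abs_eq_natAbs]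
  exact_mod_cast (natAbs_le_vnorm x i).trans h

end Norms

section SmallSubmultiset
variable {d : ℕ} {α : Type*} (vec : α → Vec d)

/-- Centring the vectors at their mean (junk `0` for the empty list) and applying the Steinitz
lemma to the coordinates in `R`. -/
lemma exists_perm_abs_sum_take_sub_le (R : Finset (Fin d)) (l : List α) {Δ : ℕ}
    (hΔ : ∀ x ∈ l, vnorm (vec x) ≤ Δ) :
    ∃ l' : List α, l'.Perm l ∧ ∀ k, ∀ i ∈ R,
      |(((l'.take k).map vec).sum i : ℚ) - (l'.take k).length * ((l.map vec).sum i / l.length)| ≤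
        (R.card + 2) * (2 * Δ) := by
  obtain rfl | hl := eq_or_ne l []
  · exact ⟨[], List.Perm.refl _, fun k i _ => by
      simpa using (by positivity : (0 : ℚ) ≤ (R.card + 2) * (2 * Δ))⟩
  set E := (l.map vec).sum
  have hn : (0 : ℚ) < l.length := by exact_mod_cast List.length_pos_iff.2 hl
  let f : α → R → ℚ := fun x j => vec x j - E j / l.length
  have hf_sum : ∀ (L : List α) j,
      (L.map f).sum j = (((L.map vec).sum j : ℤ) : ℚ) - L.length * (E j / l.length) := by
    intro L j
    induction L with
    | nil => simp
    | cons x L ih =>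
      simp only [List.map_cons, List.sum_cons, Pi.add_apply, ih, Int.cast_add, List.length_cons,
        Nat.cast_add, Nat.cast_one, f]
      ring
  have hmean : ∀ j : Fin d, |(E j : ℚ) / l.length| ≤ Δ := fun j => by
    rw [abs_div, abs_of_pos hn, div_le_iff₀ hn, mul_comm]
    have hsum := vnorm_sum_le (l.map vec) (B := Δ) (by simpa using hΔ)
    rw [List.length_map] at hsum
    exact_mod_cast abs_intCast_le_of_vnorm_le hsum j
  have hf : ∀ x ∈ l, ∀ j, |f x j| ≤ 2 * Δ := fun x hx j => by
    have := abs_intCast_le_of_vnorm_le (hΔ x hx) j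
    have := hmean j
    linarith [abs_sub (vec x j : ℚ) (E j / l.length)]
  have h0 : (l.map f).sum = 0 := funext fun j => by
    rw [hf_sum, mul_div_cancel₀ _ hn.ne']
    simp [E]
  obtain ⟨l', hperm, hbound⟩ := List.exists_perm_abs_sum_take_le l f (by positivity) hf h0
  refine ⟨l', hperm, fun k i hi => ?_⟩
  have := hbound k ⟨i, hi⟩
  rwa [hf_sum, Fintype.card_coe] at this

lemma exists_perm_natAbs_sum_take_le (R : Finset (Fin d)) (l : List α) {Δ ρ : ℕ}
    (hΔ : ∀ x ∈ l, vnorm (vec x) ≤ Δ) (hρ : vnorm (l.map vec).sum ≤ ρ) :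
    ∃ l' : List α, l'.Perm l ∧ ∀ k ≤ l.length, ∀ i ∈ R,
      (((l'.take k).map vec).sum i).natAbs ≤ ρ + (2 * R.card + 4) * Δ := by
  obtain ⟨l', hperm, hbound⟩ := exists_perm_abs_sum_take_sub_le vec R l hΔ
  refine ⟨l', hperm, fun k hk i hi => ?_⟩
  set E := (l.map vec).sum
  set P : ℚ := ((((l'.take k).map vec).sum i : ℤ) : ℚ)
  set shift : ℚ := (l'.take k).length * (E i / l.length)
  have hshift : |shift| ≤ ρ := by
    have hlen : ((l'.take k).length : ℚ) / l.length ≤ 1 :=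
      div_le_one_of_le₀ (by exact_mod_cast (List.length_take_le _ _).trans hk) (by positivity)
    rw [show shift = (l'.take k).length / l.length * E i by ring, abs_mul,
      abs_of_nonneg (by positivity)]
    nlinarith [abs_nonneg (E i : ℚ), abs_intCast_le_of_vnorm_le hρ i]
  have : |P| ≤ ρ + (2 * R.card + 4) * Δ := by
    have := abs_sub_abs_le_abs_sub P shift
    have := hbound k i hi
    linarith
  rw [← Int.cast_abs, Int.abs_eq_natAbs] at this
  exact_mod_cast this

lemma exists_lt_eqOn_of_natAbs_le (P : ℕ → Vec d) (R : Finset (Fin d)) {n B : ℕ}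
    (hP : ∀ k ≤ n, ∀ i ∈ R, (P k i).natAbs ≤ B) (hn : (2 * B + 1) ^ R.card ≤ n) :
    ∃ a b, a < b ∧ b ≤ n ∧ ∀ i ∈ R, P a i = P b i := by
  obtain ⟨a, ha, b, hb, hab, heq⟩ := Finset.exists_ne_map_eq_of_card_lt_of_maps_to
    (s := Finset.range (n + 1)) (t := Fintype.piFinset fun _ : R => Finset.Icc (-(B : ℤ)) B)
    (f := fun k (i : R) => P k i)
    (by
      rw [Fintype.card_piFinset, Finset.prod_const, Int.card_Icc, Finset.card_univ,
        Fintype.card_coe, show ((B : ℤ) + 1 - -B).toNat = 2 * B + 1 by omega]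
      simpa using hn)
    (fun k hk => Fintype.mem_piFinset.2 fun i => Finset.mem_Icc.2 <| abs_le.1 <| by
      rw [Int.abs_eq_natAbs]
      exact_mod_cast hP k (Nat.lt_succ_iff.1 (Finset.mem_range.1 hk)) i i.2)
  simp only [Finset.mem_range] at ha hb
  rcases lt_or_gt_of_ne hab with hlt | hlt
  · exact ⟨a, b, hlt, by omega, fun i hi => congrFun heq ⟨i, hi⟩⟩
  · exact ⟨b, a, hlt, by omega, fun i hi => (congrFun heq ⟨i, hi⟩).symm⟩

variable {vec} (R : Finset (Fin d)) {M : AddSubgroup (Vec d)}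

/-- Two partial sums of the Steinitz ordering agree on `R`; the block between them sums to a
vector of `M` vanishing on `R`, hence to `0`, and can be dropped. -/
lemma exists_shorter_subperm_sum_eq (hR : ∀ x ∈ M, (∀ i ∈ R, x i = 0) → x = 0)
    (l : List α) {Δ ρ : ℕ} (hM : ∀ x ∈ l, vec x ∈ M)
    (hΔ : ∀ x ∈ l, vnorm (vec x) ≤ Δ) (hρ : vnorm (l.map vec).sum ≤ ρ)
    (hlong : (2 * (ρ + (2 * R.card + 4) * Δ) + 1) ^ R.card < l.length) :
    ∃ l'' : List α, l''.Subperm l ∧ l''.length < l.length ∧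
      (l''.map vec).sum = (l.map vec).sum := by
  obtain ⟨l', hperm, hbox⟩ := exists_perm_natAbs_sum_take_le vec R l hΔ hρ
  obtain ⟨a, b, hab, hb, heq⟩ :=
    exists_lt_eqOn_of_natAbs_le (fun k => ((l'.take k).map vec).sum) R hbox hlong.le
  have hsplit : l'.take b = l'.take a ++ (l'.drop a).take (b - a) := by
    rw [← List.take_add, Nat.add_sub_cancel' hab.le]
  have hblock : (((l'.drop a).take (b - a)).map vec).sum = 0 := by
    refine hR _ (list_sum_mem fun x hx => ?_) fun i hi => ?_
    · obtain ⟨y, hy, rfl⟩ := List.mem_map.1 hx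
      exact hM y (hperm.subset (List.mem_of_mem_drop (List.mem_of_mem_take hy)))
    · have := heq i hi
      simp only [hsplit, List.map_append, List.sum_append, Pi.add_apply] at this
      omega
  have hlen : l'.length = l.length := hperm.length_eq
  refine ⟨l'.take a ++ l'.drop b, ?_, ?_, ?_⟩
  · refine List.Sublist.subperm ?_ |>.trans hperm.subperm
    calc List.Sublist (l'.take a ++ l'.drop b) (l'.take a ++ l'.drop a) :=
          (List.drop_sublist_drop_left l' hab.le).append_left _
      _ = l' := List.take_append_drop a l'
  · simp only [List.length_append, List.length_take, List.length_drop]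
    omega
  · rw [← (hperm.map vec).sum_eq]
    conv_rhs => rw [← List.take_append_drop b l', hsplit]
    simp only [List.map_append, List.sum_append, hblock]
    abel

theorem exists_subperm_sum_eq_length_le (hR : ∀ x ∈ M, (∀ i ∈ R, x i = 0) → x = 0)
    (l : List α) {Δ ρ : ℕ} (hM : ∀ x ∈ l, vec x ∈ M)
    (hΔ : ∀ x ∈ l, vnorm (vec x) ≤ Δ) (hρ : vnorm (l.map vec).sum ≤ ρ) :
    ∃ l' : List α, l'.Subperm l ∧ (l'.map vec).sum = (l.map vec).sum ∧
      l'.length ≤ (2 * (ρ + (2 * R.card + 4) * Δ) + 1) ^ R.card := by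
  induction hL : l.length using Nat.strong_induction_on generalizing l with
  | _ L ih =>
  by_cases hshort : l.length ≤ (2 * (ρ + (2 * R.card + 4) * Δ) + 1) ^ R.card
  · exact ⟨l, List.Subperm.refl l, rfl, hshort⟩
  obtain ⟨l'', hsub, hlen, hsum⟩ :=
    exists_shorter_subperm_sum_eq R hR l hM hΔ hρ (not_le.1 hshort)
  obtain ⟨l', hsub', hsum', hlen'⟩ := ih _ (hL ▸ hlen) l'' (fun x hx => hM x (hsub.subset hx))
    (fun x hx => hΔ x (hsub.subset hx)) (hsum ▸ hρ) rfl
  exact ⟨l', hsub'.trans hsub, hsum'.trans hsum, hlen'⟩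

end SmallSubmultiset

lemma length_bound_le_pow {N n M uv r d : ℕ} (hN : 2 ≤ N) (hd : 1 ≤ d) (hn : n ≤ N)
    (hM : M ≤ N) (huv : uv ≤ N) (hr : r ≤ N) (hrd : r ≤ d) :
    n ^ 2 + (2 * (uv + n ^ 2 * M + (2 * r + 4) * (n * M)) + 1) ^ r * n ≤ N ^ (9 * d) := by
  have hN1 : 1 ≤ N := by omega
  have hbase : 2 * (uv + n ^ 2 * M + (2 * r + 4) * (n * M)) + 1 ≤ N ^ 7 := by
    have h16 : 16 ≤ N ^ 4 := by simpa using Nat.pow_le_pow_left hN 4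
    calc _ ≤ 2 * (N + N ^ 2 * N + (2 * N + 4) * (N * N)) + 1 := by gcongr
      _ ≤ N ^ 4 * N ^ 3 := by nlinarith [pow_pos (by omega : 0 < N) 3]
      _ = N ^ 7 := by ring
  have hB : (2 * (uv + n ^ 2 * M + (2 * r + 4) * (n * M)) + 1) ^ r ≤ N ^ (7 * d) :=
    calc _ ≤ (N ^ 7) ^ r := Nat.pow_le_pow_left hbase r
      _ ≤ (N ^ 7) ^ d := Nat.pow_le_pow_right (Nat.one_le_pow _ _ (by omega)) hrd
      _ = N ^ (7 * d) := by rw [← pow_mul]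
  have hsq : n ^ 2 ≤ N ^ (7 * d + 1) :=
    (Nat.pow_le_pow_left hn 2).trans (Nat.pow_le_pow_right hN1 (by omega))
  calc _ ≤ N ^ (7 * d + 1) + N ^ (7 * d) * N := add_le_add hsq (Nat.mul_le_mul hB hn)
    _ = 2 * N ^ (7 * d + 1) := by ring
    _ ≤ N * N ^ (7 * d + 1) := Nat.mul_le_mul_right _ hN
    _ = N ^ (7 * d + 2) := by ring
    _ ≤ N ^ (9 * d) := Nat.pow_le_pow_right hN1 (by omega)

section Main
variable {d : ℕ}

lemma run_univ_iff {T : Finset (Trans d)} {p q : ℕ} {u v : Vec d} {π : List (Trans d)} :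
    Run T Set.univ p u q v π ↔ (∀ t ∈ π, t ∈ T) ∧ IsPathFrom p q π ∧ v = u + disp π := by
  simp [Run]

lemma disp_append_flatten (ω : List (Trans d)) (cs : List (ℕ × List (Trans d))) :
    disp (ω ++ (cs.map Prod.snd).flatten) = disp ω + (cs.map fun c => disp c.2).sum := by
  simp [disp_append, disp_flatten, Function.comp_def]

lemma disp_mem_closure {T : Finset (Trans d)} {π : List (Trans d)} (h : ∀ t ∈ π, t ∈ T) :
    disp π ∈ AddSubgroup.closure (T.image fun t => t.2.1 : Set (Vec d)) :=
  list_sum_mem fun x hx => by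
    obtain ⟨t, ht, rfl⟩ := List.mem_map.1 hx
    exact AddSubgroup.subset_closure (Finset.mem_coe.2 (Finset.mem_image_of_mem _ (h t ht)))

lemma card_visited_le {Q : Finset ℕ} {T : Finset (Trans d)} (hQT : ∀ t ∈ T, t.2.2 ∈ Q)
    (p : ℕ) {π : List (Trans d)} (hT : ∀ t ∈ π, t ∈ T) : (visited p π).card ≤ Q.card + 1 := by
  refine (Finset.card_le_card (Finset.insert_subset_insert p fun a ha => ?_)).trans
    (Finset.card_insert_le p Q)
  obtain ⟨t, ht, rfl⟩ := List.mem_map.1 (List.mem_toFinset.1 ha)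
  exact hQT t (hT t ht)

lemma length_flatten_map_snd_le {α β : Type*} {cs : List (α × List β)} {n : ℕ}
    (h : ∀ c ∈ cs, c.2.length ≤ n) : ((cs.map Prod.snd).flatten).length ≤ cs.length * n := by
  rw [List.length_flatten, List.map_map]
  refine (List.sum_le_card_nsmul _ n fun x hx => ?_).trans (by simp)
  obtain ⟨c, hc, rfl⟩ := List.mem_map.1 hx
  exact h c hc

lemma flatten_map_snd_subset_of_subperm {α β : Type*} {cs cs' : List (α × List β)}
    (h : cs'.Subperm cs) : (cs'.map Prod.snd).flatten ⊆ (cs.map Prod.snd).flatten := fun t ht => by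
  obtain ⟨_, hl, ht⟩ := List.mem_flatten.1 ht
  obtain ⟨c, hc, rfl⟩ := List.mem_map.1 hl
  exact List.mem_flatten.2 ⟨c.2, List.mem_map_of_mem (h.subset hc), ht⟩

theorem exists_short_path_disp_eq {T : Finset (Trans d)} {p q : ℕ} {π : List (Trans d)}
    (hT : ∀ t ∈ π, t ∈ T) (hπ : IsPathFrom p q π) :
    ∃ (π' : List (Trans d)) (r : ℕ), (∀ t ∈ π', t ∈ T) ∧ IsPathFrom p q π' ∧
      disp π' = disp π ∧ r ≤ d ∧ r ≤ T.card ∧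
      π'.length ≤ (visited p π).card ^ 2 + (2 * (vnorm (disp π) +
        (visited p π).card ^ 2 * tnorm T + (2 * r + 4) * ((visited p π).card * tnorm T)) + 1) ^ r *
        (visited p π).card := by
  obtain ⟨ω, cs, hω, hωvis, hωlen, hcs, hperm⟩ := exists_short_path_and_cycles π hπ
  have hT' : ∀ t ∈ ω ++ (cs.map Prod.snd).flatten, t ∈ T := fun t ht => hT t (hperm.symm.subset ht)
  have hcsT : ∀ c ∈ cs, ∀ t ∈ c.2, t ∈ T := fun c hc t ht => hT' t (List.mem_append_right _
    (List.mem_flatten.2 ⟨c.2, List.mem_map_of_mem hc, ht⟩))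
  have hdisp : disp π = disp ω + (cs.map fun c => disp c.2).sum := by
    rw [disp_eq_of_perm hperm, disp_append_flatten]
  have hcycles : vnorm (cs.map fun c => disp c.2).sum ≤
      vnorm (disp π) + (visited p π).card ^ 2 * tnorm T := by
    rw [show (cs.map fun c => disp c.2).sum = disp π - disp ω by rw [hdisp]; abel]
    refine (vnorm_sub_le _ _).trans (add_le_add le_rfl ((vnorm_disp_le fun t ht =>
      hT' t (List.mem_append_left _ ht)).trans ?_))
    exact Nat.mul_le_mul_right _ hωlen.le
  obtain ⟨R, hRcard, hR⟩ := exists_finset_coord_determining_closure (T.image fun t => t.2.1)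
  obtain ⟨cs', hsub, hsum, hlen⟩ := exists_subperm_sum_eq_length_le (vec := fun c => disp c.2)
    R hR cs (fun c hc => disp_mem_closure (hcsT c hc)) (Δ := (visited p π).card * tnorm T)
    (fun c hc => (vnorm_disp_le (hcsT c hc)).trans (Nat.mul_le_mul_right _ (hcs c hc).2.2))
    hcycles
  obtain ⟨ω', hω', hperm'⟩ := exists_perm_append_of_cycles cs' hω
    fun c hc => ⟨hωvis ▸ (hcs c (hsub.subset hc)).1, (hcs c (hsub.subset hc)).2.1⟩
  refine ⟨ω', R.card, fun t ht => hT' t ?_, hω', ?_, by simpa using R.card_le_univ,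
    Finset.card_image_le.trans' hRcard, ?_⟩
  · refine List.append_subset.2 ⟨List.subset_append_left _ _, fun x hx => ?_⟩ (hperm'.subset ht)
    exact List.mem_append_right _ (flatten_map_snd_subset_of_subperm hsub hx)
  · rw [disp_eq_of_perm hperm', disp_append_flatten, hsum, ← hdisp]
  · have := length_flatten_map_snd_le fun c hc => (hcs c (hsub.subset hc)).2.2
    have := Nat.mul_le_mul_right (visited p π).card hlen
    rw [hperm'.length_eq, List.length_append]
    omega

end Main

/-- If `q(v)` is ℤ-reachable from `p(u)` in a `d`-VASS then it
is ℤ-reachable by a path of length at most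
`(|Q| + |T| + ‖T‖ + ‖u‖ + ‖v‖ + 2)^{c·d}`. -/
theorem statement18 :
    ∃ c : ℕ, ∀ d : ℕ, 1 ≤ d → ∀ (Q : Finset ℕ) (T : Finset (Trans d)),
      (∀ t ∈ T, t.1 ∈ Q ∧ t.2.2 ∈ Q) →
      ∀ (p q : ℕ) (u v : Vec d),
        Reach T Set.univ p u q v →
        ∃ π, Run T Set.univ p u q v π ∧
          π.length ≤
            (Q.card + T.card + tnorm T + vnorm u + vnorm v + 2) ^ (c * d) := by
  refine ⟨9, fun d hd Q T hQT p q u v ⟨π, hrun⟩ => ?_⟩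
  obtain ⟨hT, hπ, hv⟩ := run_univ_iff.1 hrun
  obtain ⟨π', r, hT', hπ', hdisp, hrd, hrT, hlen⟩ := exists_short_path_disp_eq hT hπ
  have hn := card_visited_le (fun t ht => (hQT t ht).2) p hT
  have huv : vnorm (disp π) ≤ vnorm v + vnorm u := by
    rw [show disp π = v - u by rw [hv]; abel]
    exact vnorm_sub_le v u
  refine ⟨π', run_univ_iff.2 ⟨hT', hπ', hdisp ▸ hv⟩, hlen.trans ?_⟩
  exact length_bound_le_pow (by omega) hd (by omega) (by omega) (by omega) (by omega) hrd

end VASS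
end

section
/- Let G = (U,E) be a finite directed graph (with E ⊆ U×Σ×U for some set Σ) and let π ∈ E* be a path in G. Then there exist a path ρ₁ in G of length at most |U|·|E| that visits every vertex occurring on π at least once, and a flow-preserving function σ₁ : E → ℕ, such that Par_π = Par_{ρ₁} + σ₁ (pointwise addition of functions from E to ℕ). -/
/-!
Shorten `π` to a sub-list `ρ` with the same endpoints that still visits every vertex of `π`;
then `σ₁ = Par_π - Par_ρ` is flow-preserving, because any two paths with the same endpoints have
the same in/out imbalance at every vertex. To shorten `π`, split it as `A e B` where `e` is the
last edge reaching a vertex not on `A`, shorten `A` recursively, and replace `e B` by a path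
from the same endpoints that starts with `e` and repeats no edge (cut out the closed walk between
two occurrences of an edge). Every vertex of `π` thus accounts for at most `|E|` edges of `ρ`.
-/

namespace LabeledGraph

variable {ν α : Type} [DecidableEq ν] [DecidableEq α]

/-- `IsPathFrom p q π` : the word of edges `π` is a path from `p` to `q`. -/
def IsPathFrom : ν → ν → List (ν × α × ν) → Prop
  | p, q, [] => p = q
  | p, q, e :: rest => e.1 = p ∧ IsPathFrom e.2.2 q rest

/-- The Parikh image of a word of edges. -/
def parikh (π : List (ν × α × ν)) : (ν × α × ν) → ℕ := fun e => π.count e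

/-- A linear path scheme, presented as the initial segment `α₀` together with
the list of pairs `(βᵢ, αᵢ)`. -/
abbrev LPS (ν α : Type) := List (ν × α × ν) × List (List (ν × α × ν) × List (ν × α × ν))

/-- The underlying word `α₀ β₁ α₁ ⋯ β_k α_k` of a linear path scheme. -/
def lpsSupport (ρ : LPS ν α) : List (ν × α × ν) :=
  ρ.1 ++ (ρ.2.map fun s => s.1 ++ s.2).flatten

/-- The length of a linear path scheme. -/
def lpsLen (ρ : LPS ν α) : ℕ := (lpsSupport ρ).length

/-- The number of cycles of a linear path scheme. -/
def numCycles (ρ : LPS ν α) : ℕ := ρ.2.length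

/-- `ρ` is a linear path scheme from `p` to `q` over the edge set `E`. -/
def IsLPSFrom (E : Finset (ν × α × ν)) (p q : ν) (ρ : LPS ν α) : Prop :=
  (∀ e ∈ lpsSupport ρ, e ∈ E) ∧ IsPathFrom p q (lpsSupport ρ) ∧
    ∀ s ∈ ρ.2, s.1 ≠ [] ∧ ∃ r, IsPathFrom r r s.1

/-- The word `α₀ β₁^{e₁} α₁ ⋯ β_k^{e_k} α_k` of a linear path scheme. -/
def lpsWord (ρ : LPS ν α) (e : List ℕ) : List (ν × α × ν) :=
  ρ.1 ++ (List.zipWith (fun s n => (List.replicate n s.1).flatten ++ s.2) ρ.2 e).flatten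

/-- Membership in the language of a linear path scheme. -/
def InLang (ρ : LPS ν α) (π : List (ν × α × ν)) : Prop :=
  ∃ e : List ℕ, e.length = numCycles ρ ∧ π = lpsWord ρ e

/-- A vertex `x` occurs on the word of edges `w`. -/
def OccursOn (x : ν) (w : List (ν × α × ν)) : Prop :=
  ∃ e ∈ w, e.1 = x ∨ e.2.2 = x

/-- A function `σ₁` on edges is flow-preserving if at every vertex the incoming
and outgoing weights agree. -/
def FlowPreserving (E : Finset (ν × α × ν)) (s : (ν × α × ν) → ℕ) : Prop :=
  ∀ x : ν, ∑ e ∈ E.filter (fun e => e.2.2 = x), s e =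
    ∑ e ∈ E.filter (fun e => e.1 = x), s e

end LabeledGraph

theorem List.Nodup.length_le_card_of_forall_mem {β : Type*} {l : List β} {s : Finset β}
    (hl : l.Nodup) (hs : ∀ x ∈ l, x ∈ s) : l.length ≤ s.card := by
  classical
  exact List.toFinset_card_of_nodup hl ▸
    Finset.card_le_card fun x hx => hs x (List.mem_toFinset.1 hx)

namespace LabeledGraph

variable {ν α : Type} {p q : ν} {π ρ : List (ν × α × ν)}

theorem isPathFrom_append_iff {A B : List (ν × α × ν)} :
    IsPathFrom p q (A ++ B) ↔ ∃ m, IsPathFrom p m A ∧ IsPathFrom m q B := by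
  induction A generalizing p with
  | nil => exact ⟨fun h => ⟨p, rfl, h⟩, fun ⟨_, hA, hB⟩ => hA ▸ hB⟩
  | cons e A ih => simp only [List.cons_append, IsPathFrom, ih]; grind

theorem IsPathFrom.append {m : ν} {A B : List (ν × α × ν)} (hA : IsPathFrom p m A)
    (hB : IsPathFrom m q B) : IsPathFrom p q (A ++ B) :=
  isPathFrom_append_iff.2 ⟨m, hA, hB⟩

theorem IsPathFrom.exists_nodup_sublist_cons {e : ν × α × ν} (h : IsPathFrom p q (e :: π)) :
    ∃ ρ, IsPathFrom p q (e :: ρ) ∧ ρ.Sublist π ∧ (e :: ρ).Nodup := by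
  induction π generalizing e p with
  | nil => exact ⟨[], h, .refl _, List.nodup_singleton e⟩
  | cons f π ih =>
    obtain ⟨ρ, hρ, hsub, hnodup⟩ := ih h.2
    replace hsub := hsub.cons_cons f
    by_cases he : e ∈ f :: ρ
    -- the part of the shortened tail up to the repetition of `e` is a closed walk: drop it
    · obtain ⟨X, Y, hXY⟩ := List.mem_iff_append.1 he
      rw [hXY] at hρ hnodup hsub
      obtain ⟨m, -, rfl, hY⟩ := isPathFrom_append_iff.1 hρ
      have hY_sub : (e :: Y).Sublist (X ++ e :: Y) := List.sublist_append_right X _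
      exact ⟨Y, ⟨h.1, hY⟩, (List.sublist_cons_self e Y).trans (hY_sub.trans hsub),
        hnodup.sublist hY_sub⟩
    · exact ⟨f :: ρ, ⟨h.1, hρ⟩, hsub, List.nodup_cons.2 ⟨he, hnodup⟩⟩

section Vertices

variable [DecidableEq ν]

def vertices (π : List (ν × α × ν)) : Finset ν :=
  (π.flatMap fun e => [e.1, e.2.2]).toFinset

theorem mem_vertices {x : ν} : x ∈ vertices π ↔ OccursOn x π := by
  simp [vertices, OccursOn, eq_comm]

@[simp]
theorem vertices_append (A B : List (ν × α × ν)) :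
    vertices (A ++ B) = vertices A ∪ vertices B := by
  simp [vertices, List.toFinset_append]

@[simp]
theorem vertices_singleton (e : ν × α × ν) : vertices [e] = {e.1, e.2.2} := by
  simp [vertices]

theorem vertices_cons (e : ν × α × ν) (π : List (ν × α × ν)) :
    vertices (e :: π) = {e.1, e.2.2} ∪ vertices π := by
  rw [← vertices_singleton, ← vertices_append, List.singleton_append]

theorem IsPathFrom.target_mem_vertices (h : IsPathFrom p q π) (hπ : π ≠ []) :
    q ∈ vertices π := by
  induction π using List.reverseRecOn generalizing q with
  | nil => exact absurd rfl hπ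
  | append_singleton π e _ =>
    obtain ⟨m, -, rfl, rfl⟩ := isPathFrom_append_iff.1 h
    simp

theorem IsPathFrom.exists_last_new_vertex (h : IsPathFrom p q π) (hπ : π ≠ []) :
    ∃ A e B, π = A ++ e :: B ∧ e.2.2 ∉ vertices A ∧ vertices π ⊆ vertices (A ++ [e]) := by
  induction π using List.reverseRecOn generalizing q with
  | nil => exact absurd rfl hπ
  | append_singleton π f ih =>
    obtain ⟨m, hπm, rfl, rfl⟩ := isPathFrom_append_iff.1 h
    by_cases hnew : f.2.2 ∈ vertices π
    · have hne : π ≠ [] := by rintro rfl; exact Finset.notMem_empty _ hnew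
      have hf : vertices [f] ⊆ vertices π := by
        simpa [Finset.insert_subset_iff] using ⟨hπm.target_mem_vertices hne, hnew⟩
      obtain ⟨A, e, B, rfl, he, hcover⟩ := ih hπm hne
      refine ⟨A, e, B ++ [f], by simp, he, ?_⟩
      rwa [vertices_append, Finset.union_eq_left.2 hf]
    · exact ⟨π, f, [], rfl, hnew, le_rfl⟩

end Vertices

theorem IsPathFrom.exists_sublist_vertices_subset [DecidableEq ν] [DecidableEq α]
    {E : Finset (ν × α × ν)} (hπE : ∀ e ∈ π, e ∈ E) (h : IsPathFrom p q π) :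
    ∃ ρ, IsPathFrom p q ρ ∧ ρ.Sublist π ∧ vertices π ⊆ vertices ρ ∧
      ρ.length ≤ (vertices π).card * E.card := by
  induction hn : π.length using Nat.strong_induction_on generalizing π q with | _ n ih =>
  rcases eq_or_ne π [] with rfl | hπ
  · exact ⟨[], h, .refl _, le_rfl, by simp⟩
  obtain ⟨A, e, B, rfl, hnew, hcover⟩ := h.exists_last_new_vertex hπ
  obtain ⟨m, hA, heB⟩ := isPathFrom_append_iff.1 h
  have hAE : ∀ f ∈ A, f ∈ E := fun f hf => hπE f (by simp [hf])
  obtain ⟨ρ, hρ, hρA, hcoverA, hlenA⟩ := ih A.length (by simp [← hn]) hAE hA rfl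
  obtain ⟨τ, hτ, hτB, hnodup⟩ := heB.exists_nodup_sublist_cons
  have hlen_eτ : (e :: τ).length ≤ E.card := hnodup.length_le_card_of_forall_mem
    fun f hf => hπE f (List.mem_append_right A ((hτB.cons_cons e).subset hf))
  have hcardA : (vertices A).card < (vertices (A ++ e :: B)).card := by
    refine Finset.card_lt_card ((Finset.ssubset_iff_of_subset (by simp)).2 ⟨e.2.2, ?_, hnew⟩)
    simp [vertices_cons]
  refine ⟨ρ ++ e :: τ, hρ.append hτ, hρA.append (hτB.cons_cons e), hcover.trans ?_, ?_⟩
  · rw [vertices_append, vertices_append, vertices_singleton, vertices_cons]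
    exact Finset.union_subset_union hcoverA Finset.subset_union_left
  · calc (ρ ++ e :: τ).length = ρ.length + (e :: τ).length := List.length_append
      _ ≤ (vertices A).card * E.card + E.card := add_le_add hlenA hlen_eτ
      _ = ((vertices A).card + 1) * E.card := by ring
      _ ≤ (vertices (A ++ e :: B)).card * E.card := Nat.mul_le_mul_right _ hcardA

theorem IsPathFrom.countP_target_add_eq [DecidableEq ν] (h : IsPathFrom p q π) (x : ν) :
    π.countP (fun e => e.2.2 = x) + (if p = x then 1 else 0) =
      π.countP (fun e => e.1 = x) + (if q = x then 1 else 0) := by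
  induction π generalizing p with
  | nil => cases h; rfl
  | cons e π ih =>
    obtain ⟨rfl, h⟩ := h
    have := ih h
    simp only [List.countP_cons, decide_eq_true_eq]
    split_ifs at this ⊢ <;> omega

theorem sum_filter_parikh [DecidableEq ν] [DecidableEq α] {E : Finset (ν × α × ν)}
    (hπE : ∀ e ∈ π, e ∈ E) (P : ν × α × ν → Prop) [DecidablePred P] :
    ∑ e ∈ E with P e, parikh π e = π.countP P := by
  induction π with
  | nil => simp [parikh]
  | cons f π ih =>
    have hf : f ∈ E := hπE f List.mem_cons_self
    simp only [parikh, List.count_cons, beq_iff_eq, Finset.sum_add_distrib, List.countP_cons,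
      decide_eq_true_eq] at ih ⊢
    rw [ih fun e he => hπE e (List.mem_cons_of_mem f he), Finset.sum_ite_eq]
    simp [hf]

theorem flowPreserving_parikh_tsub [DecidableEq ν] [DecidableEq α] {E : Finset (ν × α × ν)}
    (hπE : ∀ e ∈ π, e ∈ E) (hπ : IsPathFrom p q π) (hρ : IsPathFrom p q ρ)
    (hρπ : ρ.Sublist π) : FlowPreserving E fun e => parikh π e - parikh ρ e := by
  have hρE : ∀ e ∈ ρ, e ∈ E := fun e he => hπE e (hρπ.subset he)
  have hle : ∀ e ∈ E, parikh ρ e ≤ parikh π e := fun e _ => hρπ.count_le e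
  intro x
  rw [Finset.sum_tsub_distrib _ fun e he => hle e (Finset.mem_filter.1 he).1,
    Finset.sum_tsub_distrib _ fun e he => hle e (Finset.mem_filter.1 he).1,
    sum_filter_parikh hπE, sum_filter_parikh hπE, sum_filter_parikh hρE, sum_filter_parikh hρE]
  have := hπ.countP_target_add_eq x
  have := hρ.countP_target_add_eq x
  omega

/-- claim (a)–(c) in the proof of the Parikh image lemma.
Every path `π` decomposes as a short path `ρ₁` visiting all vertices of `π`,
plus a flow-preserving remainder `σ₁`, on the level of Parikh images. -/
theorem statement19 {ν α : Type} [DecidableEq ν] [DecidableEq α]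
    (U : Finset ν) (E : Finset (ν × α × ν))
    (hE : ∀ e ∈ E, e.1 ∈ U ∧ e.2.2 ∈ U)
    (π : List (ν × α × ν)) (hπE : ∀ e ∈ π, e ∈ E)
    (hπ : ∃ p q, IsPathFrom p q π) :
    ∃ (ρ₁ : List (ν × α × ν)) (σ₁ : (ν × α × ν) → ℕ),
      (∀ e ∈ ρ₁, e ∈ E) ∧ (∃ p q, IsPathFrom p q ρ₁) ∧
      ρ₁.length ≤ U.card * E.card ∧
      (∀ x : ν, OccursOn x π → OccursOn x ρ₁) ∧
      FlowPreserving E σ₁ ∧ (∀ e, e ∉ E → σ₁ e = 0) ∧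
      (∀ e, parikh π e = parikh ρ₁ e + σ₁ e) := by
  obtain ⟨p, q, hpath⟩ := hπ
  obtain ⟨ρ, hρ, hρπ, hcover, hlen⟩ := hpath.exists_sublist_vertices_subset hπE
  have hvertU : vertices π ⊆ U := fun x hx => by
    obtain ⟨e, he, rfl | rfl⟩ := mem_vertices.1 hx
    exacts [(hE e (hπE e he)).1, (hE e (hπE e he)).2]
  refine ⟨ρ, fun e => parikh π e - parikh ρ e, fun e he => hπE e (hρπ.subset he), ⟨p, q, hρ⟩,
    hlen.trans (Nat.mul_le_mul_right _ (Finset.card_le_card hvertU)),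
    fun x hx => mem_vertices.1 (hcover (mem_vertices.2 hx)),
    flowPreserving_parikh_tsub hπE hpath hρ hρπ, fun e he => ?_, fun e => ?_⟩
  · simp [parikh, List.count_eq_zero_of_not_mem fun h => he (hπE e h)]
  · exact (Nat.add_sub_of_le (hρπ.count_le e)).symm

end LabeledGraph
end
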